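/- arXiv:2510.02074 — 6 statements merged into one kernel-verified Lean document; each statement's English description precedes it below -/
import Mathlib

section
/- Let S be a digraph on m nodes with cycles C_1,...,C_k and node-cycle incidence vectors z_j = Σ_{u_i ∈ C_j} e_i ∈ ℝ^m. Let 𝖷 be the convex cone generated by z_1,...,z_k, and let 𝖠 be the set of nonnegative m×m matrices A supported on the edges of S with Aᵀ𝟙 = A𝟙. Then 𝖷 = { A𝟙 : A ∈ 𝖠 }. -/
/-- `l` is the vertex list of a directed cycle of the digraph `E`. -/
def IsDiCycle {V : Type*} (E : V → V → Prop) (l : List V) : Prop :=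
  l ≠ [] ∧ l.Nodup ∧
    ∀ i : Fin l.length,
      E (l.get i) (l.get ⟨(i.1 + 1) % l.length, Nat.mod_lt _ i.pos⟩)

/-- The 0/1 adjacency matrix of the directed cycle with vertex list `l`. -/
def cycleAdj {m : ℕ} (l : List (Fin m)) : Matrix (Fin m) (Fin m) ℝ :=
  Matrix.of fun a b =>
    if ∃ i : Fin l.length,
        l.get i = a ∧ l.get ⟨(i.1 + 1) % l.length, Nat.mod_lt _ i.pos⟩ = b
    then 1 else 0

/-- The node-cycle incidence vector `z_C = ∑_{u_i ∈ C} e_i` of the cycle with vertex list `l`. -/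
def cycleVec {m : ℕ} (l : List (Fin m)) : Fin m → ℝ :=
  fun i => if i ∈ l then 1 else 0

def nxt {m : ℕ} (l : List (Fin m)) (i : Fin l.length) : Fin l.length :=
  ⟨(i.1 + 1) % l.length, Nat.mod_lt _ i.pos⟩

lemma isDiCycle_iff {m : ℕ} (E : Fin m → Fin m → Prop) (l : List (Fin m)) :
    IsDiCycle E l ↔ l ≠ [] ∧ l.Nodup ∧ ∀ i, E (l.get i) (l.get (nxt l i)) := Iff.rfl

lemma cycleAdj_apply {m : ℕ} (l : List (Fin m)) (a b : Fin m) :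
    cycleAdj l a b = if ∃ i, l.get i = a ∧ l.get (nxt l i) = b then 1 else 0 := rfl

lemma cycleAdj_nonneg {m : ℕ} (l : List (Fin m)) (a b : Fin m) : 0 ≤ cycleAdj l a b := by
  rw [cycleAdj_apply]; split <;> norm_num

lemma nxt_bijective {m : ℕ} (l : List (Fin m)) : Function.Bijective (nxt l) := by
  rw [Fintype.bijective_iff_injective_and_card]
  refine ⟨fun i j h => ?_, rfl⟩
  haveI : NeZero l.length := ⟨i.pos.ne'⟩
  have hi : nxt l i = i + 1 := by
    apply Fin.ext
    simp [nxt, Fin.add_def, Nat.add_mod, Nat.mod_mod_of_dvd]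
  have hj : nxt l j = j + 1 := by
    apply Fin.ext
    simp [nxt, Fin.add_def, Nat.add_mod]
  rw [hi, hj] at h
  exact add_right_cancel h

lemma mulVec_cycleAdj {m : ℕ} (l : List (Fin m)) (hl : l.Nodup) :
    (cycleAdj l).mulVec 1 = cycleVec l := by
  funext a
  have hinj : Function.Injective l.get := List.nodup_iff_injective_get.mp hl
  simp only [Matrix.mulVec, dotProduct, Pi.one_apply, mul_one]
  by_cases ha : a ∈ l
  · obtain ⟨i0, hi0⟩ := List.mem_iff_get.mp ha
    have : ∀ b, cycleAdj l a b = if b = l.get (nxt l i0) then 1 else 0 := by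
      intro b
      rw [cycleAdj_apply]
      congr 1
      apply propext
      constructor
      · rintro ⟨i, h1, h2⟩
        have : i = i0 := hinj (h1.trans hi0.symm)
        rw [← h2, this]
      · rintro rfl; exact ⟨i0, hi0, rfl⟩
    simp only [this]
    rw [Finset.sum_ite_eq' Finset.univ]
    simp [cycleVec, ha]
  · have : ∀ b, cycleAdj l a b = 0 := by
      intro b
      rw [cycleAdj_apply, if_neg]
      rintro ⟨i, h1, -⟩
      exact ha (h1 ▸ l.get_mem i)
    simp [this, cycleVec, ha]

lemma transpose_mulVec_cycleAdj {m : ℕ} (l : List (Fin m)) (hl : l.Nodup) :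
    (cycleAdj l).transpose.mulVec 1 = cycleVec l := by
  funext b
  have hinj : Function.Injective l.get := List.nodup_iff_injective_get.mp hl
  simp only [Matrix.mulVec, dotProduct, Pi.one_apply, mul_one, Matrix.transpose_apply]
  by_cases hb : b ∈ l
  · obtain ⟨i0, hi0⟩ := List.mem_iff_get.mp hb
    obtain ⟨ip, hip⟩ := (nxt_bijective l).2 i0
    have : ∀ a, cycleAdj l a b = if a = l.get ip then 1 else 0 := by
      intro a
      rw [cycleAdj_apply]
      congr 1
      apply propext
      constructor
      · rintro ⟨i, h1, h2⟩
        have h3 : nxt l i = i0 := hinj (h2.trans hi0.symm)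
        have h4 : i = ip := (nxt_bijective l).1 (h3.trans hip.symm)
        rw [← h1, h4]
      · rintro rfl; exact ⟨ip, rfl, hip ▸ hi0⟩
    simp only [this]
    rw [Finset.sum_ite_eq' Finset.univ]
    simp [cycleVec, hb]
  · have : ∀ a, cycleAdj l a b = 0 := by
      intro a
      rw [cycleAdj_apply, if_neg]
      rintro ⟨i, -, h2⟩
      exact hb (h2 ▸ l.get_mem _)
    simp [this, cycleVec, hb]

lemma exists_diCycle {m : ℕ} (R : Fin m → Fin m → Prop)
    (hstep : ∀ v, (∃ u, R u v) → ∃ w, R v w)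
    (v0 : Fin m) (h0 : ∃ u, R u v0) :
    ∃ l : List (Fin m), IsDiCycle R l := by
  classical
  let step : {v : Fin m // ∃ u, R u v} → {v : Fin m // ∃ u, R u v} :=
    fun p => ⟨(hstep p.1 p.2).choose, ⟨p.1, (hstep p.1 p.2).choose_spec⟩⟩
  let g : ℕ → Fin m := fun n => ((step^[n]) ⟨v0, h0⟩).1
  have hg : ∀ n, R (g n) (g (n + 1)) := by
    intro n
    have h2 : g (n + 1) = (step ((step^[n]) ⟨v0, h0⟩)).1 := by
      simp only [g, Function.iterate_succ_apply']
    rw [h2]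
    exact (hstep _ ((step^[n]) ⟨v0, h0⟩).2).choose_spec
  obtain ⟨a, b, hab, heq⟩ := Finite.exists_ne_map_eq_of_infinite g
  have hrep : ∃ n, ∃ p, p < n ∧ g p = g n := by
    rcases lt_or_gt_of_ne hab with h | h
    · exact ⟨b, a, h, heq⟩
    · exact ⟨a, b, h, heq.symm⟩
  let n2 := Nat.find hrep
  obtain ⟨n1, hn1, heq2⟩ := Nat.find_spec hrep
  have hinj : ∀ x y, x < y → y < n2 → g x ≠ g y := by
    intro x y hxy hy hgxy
    exact Nat.find_min hrep hy ⟨x, hxy, hgxy⟩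
  set L := n2 - n1 with hL
  have hLpos : 0 < L := Nat.sub_pos_of_lt hn1
  refine ⟨(List.range L).map (fun t => g (n1 + t)), ?_, ?_, ?_⟩
  · simp [List.map_eq_nil_iff, List.range_eq_nil]
    omega
  · rw [List.nodup_iff_injective_get]
    intro i j hij
    simp only [List.get_eq_getElem, List.getElem_map, List.getElem_range] at hij
    have hi := i.2; have hj := j.2
    simp only [List.length_map, List.length_range] at hi hj
    apply Fin.ext
    by_contra hne
    rcases lt_or_gt_of_ne hne with h | h
    · exact hinj _ _ (by omega) (by omega) hij
    · exact hinj _ _ (by omega) (by omega) hij.symm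
  · intro i
    have hlen : ((List.range L).map (fun t => g (n1 + t))).length = L := by simp
    have hi : i.1 < L := by have := i.2; simpa [hlen] using this
    have hget : ∀ t (ht : t < ((List.range L).map (fun t => g (n1 + t))).length),
        ((List.range L).map (fun t => g (n1 + t))).get ⟨t, ht⟩ = g (n1 + t) := by
      intro t ht
      simp
    rw [hget, hget]
    simp only [hlen]
    by_cases hlast : i.1 + 1 = L
    · have h1 : (i.1 + 1) % L = 0 := by rw [hlast]; exact Nat.mod_self L
      rw [h1]
      have := hg (n1 + i.1)
      rw [show n1 + i.1 + 1 = n2 by omega, ← heq2] at this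
      simpa [Nat.add_zero] using this
    · have h1 : (i.1 + 1) % L = i.1 + 1 := Nat.mod_eq_of_lt (by omega)
      rw [h1]
      have := hg (n1 + i.1)
      rw [show n1 + i.1 + 1 = n1 + (i.1 + 1) by omega] at this
      exact this

lemma sum_mulVec' {k m : ℕ} (f : Fin k → Matrix (Fin m) (Fin m) ℝ) (v : Fin m → ℝ) :
    (∑ j, f j).mulVec v = ∑ j, (f j).mulVec v := by
  funext a
  simp only [Matrix.mulVec, dotProduct, Matrix.sum_apply, Finset.sum_apply,
    Finset.sum_mul]
  rw [Finset.sum_comm]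

lemma decompose {m k : ℕ} (E : Fin m → Fin m → Prop) (C : Fin k → List (Fin m))
    (hC : ∀ j, IsDiCycle E (C j))
    (hall : ∀ l, IsDiCycle E l → ∃ j, cycleAdj (C j) = cycleAdj l) :
    ∀ n (A : Matrix (Fin m) (Fin m) ℝ),
      (Finset.univ.filter fun p : Fin m × Fin m => A p.1 p.2 ≠ 0).card = n →
      (∀ i j, 0 ≤ A i j) → (∀ i j, A i j ≠ 0 → E i j) →
      A.transpose.mulVec 1 = A.mulVec 1 →
      ∃ c : Fin k → ℝ, (∀ j, 0 ≤ c j) ∧ A.mulVec 1 = ∑ j, c j • cycleVec (C j) := by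
  classical
  intro n
  induction n using Nat.strong_induction_on with
  | _ n ih =>
  intro A hcard hnn hsupp hbal
  by_cases hA : ∃ p : Fin m × Fin m, A p.1 p.2 ≠ 0
  swap
  · push_neg at hA
    have hA0 : A = 0 := by
      ext a b; exact hA (a, b)
    refine ⟨0, fun j => le_refl 0, ?_⟩
    simp [hA0, Matrix.zero_mulVec]
  · obtain ⟨⟨i0, j0⟩, hp⟩ := hA
    set R : Fin m → Fin m → Prop := fun a b => A a b ≠ 0 with hR
    have hstep : ∀ v, (∃ u, R u v) → ∃ w, R v w := by
      intro v ⟨u, hu⟩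
      by_contra hw
      push_neg at hw
      have hcol : (0:ℝ) < ∑ x, A x v := by
        apply Finset.sum_pos' (fun x _ => hnn x v)
        exact ⟨u, Finset.mem_univ u, lt_of_le_of_ne (hnn u v) (Ne.symm hu)⟩
      have hrow : ∑ x, A v x = 0 :=
        Finset.sum_eq_zero fun x _ => not_not.mp (hw x)
      have e1 : A.transpose.mulVec 1 v = ∑ x, A x v := by
        simp [Matrix.mulVec, dotProduct, Matrix.transpose_apply]
      have e2 : A.mulVec 1 v = ∑ x, A v x := by
        simp [Matrix.mulVec, dotProduct]
      have := congrFun hbal v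
      rw [e1, e2, hrow] at this
      exact absurd (this ▸ hcol) (lt_irrefl 0)
    obtain ⟨l, hcyc⟩ := exists_diCycle R hstep j0 ⟨i0, hp⟩
    obtain ⟨hne, hnodup, hesl⟩ := hcyc
    have hcycE : IsDiCycle E l := ⟨hne, hnodup, fun i => hsupp _ _ (hesl i)⟩
    haveI : Nonempty (Fin l.length) := ⟨⟨0, List.length_pos_iff.mpr hne⟩⟩
    obtain ⟨istar, -, hmin⟩ := Finset.exists_min_image Finset.univ
      (fun i : Fin l.length => A (l.get i) (l.get (nxt l i))) Finset.univ_nonempty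
    set ε : ℝ := A (l.get istar) (l.get (nxt l istar)) with hε
    have hεpos : 0 < ε :=
      lt_of_le_of_ne (hnn _ _) (Ne.symm (hesl istar))
    have hεle : ∀ i : Fin l.length, ε ≤ A (l.get i) (l.get (nxt l i)) :=
      fun i => hmin i (Finset.mem_univ i)
    -- key: on cycle edges, entry is 1 and A ≥ ε
    have hkey : ∀ a b, cycleAdj l a b ≠ 0 → cycleAdj l a b = 1 ∧ ε ≤ A a b := by
      intro a b hab
      rw [cycleAdj_apply] at hab ⊢
      rcases Classical.em (∃ i, l.get i = a ∧ l.get (nxt l i) = b) with h | h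
      · obtain ⟨i, h1, h2⟩ := h
        refine ⟨if_pos ⟨i, h1, h2⟩, ?_⟩
        rw [← h1, ← h2]
        exact hεle i
      · exact absurd (if_neg h) hab
    set A' : Matrix (Fin m) (Fin m) ℝ := A - ε • cycleAdj l with hA'
    have hA'app : ∀ a b, A' a b = A a b - ε * cycleAdj l a b := by
      intro a b; simp [hA', Matrix.sub_apply]
    have hnn' : ∀ a b, 0 ≤ A' a b := by
      intro a b
      rw [hA'app]
      by_cases h : cycleAdj l a b = 0
      · simp [h, hnn a b]
      · obtain ⟨h1, h2⟩ := hkey a b h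
        rw [h1, mul_one]
        linarith
    have hsub : ∀ a b, A' a b ≠ 0 → A a b ≠ 0 := by
      intro a b h hab
      apply h
      rw [hA'app, hab]
      by_cases hc : cycleAdj l a b = 0
      · simp [hc]
      · obtain ⟨-, h2⟩ := hkey a b hc
        linarith [hεpos]
    have hsupp' : ∀ a b, A' a b ≠ 0 → E a b := fun a b h => hsupp a b (hsub a b h)
    have hzero : A' (l.get istar) (l.get (nxt l istar)) = 0 := by
      rw [hA'app]
      have h1 : cycleAdj l (l.get istar) (l.get (nxt l istar)) = 1 := by
        rw [cycleAdj_apply, if_pos ⟨istar, rfl, rfl⟩]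
      rw [h1, mul_one, ← hε, sub_self]
    have hssub : (Finset.univ.filter fun p : Fin m × Fin m => A' p.1 p.2 ≠ 0)
        ⊂ (Finset.univ.filter fun p : Fin m × Fin m => A p.1 p.2 ≠ 0) := by
      constructor
      · intro p hp'
        simp only [Finset.mem_filter, Finset.mem_univ, true_and] at hp' ⊢
        exact hsub p.1 p.2 hp'
      · intro hcon
        have h1 : ((l.get istar, l.get (nxt l istar)) : Fin m × Fin m) ∈
            Finset.univ.filter fun p : Fin m × Fin m => A p.1 p.2 ≠ 0 := by
          simp only [Finset.mem_filter, Finset.mem_univ, true_and]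
          exact hesl istar
        have h2 := hcon h1
        simp only [Finset.mem_filter, Finset.mem_univ, true_and] at h2
        exact h2 hzero
    have hcard' : (Finset.univ.filter fun p : Fin m × Fin m => A' p.1 p.2 ≠ 0).card < n :=
      hcard ▸ Finset.card_lt_card hssub
    have hbal' : A'.transpose.mulVec 1 = A'.mulVec 1 := by
      rw [hA', Matrix.transpose_sub, Matrix.transpose_smul, Matrix.sub_mulVec,
        Matrix.sub_mulVec, Matrix.smul_mulVec, Matrix.smul_mulVec,
        hbal, transpose_mulVec_cycleAdj l hnodup, mulVec_cycleAdj l hnodup]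
    obtain ⟨c', hc'nn, hc'⟩ := ih _ hcard' A' rfl hnn' hsupp' hbal'
    obtain ⟨jstar, hjstar⟩ := hall l hcycE
    have hvec : cycleVec (C jstar) = cycleVec l := by
      rw [← mulVec_cycleAdj _ (hC jstar).2.1, hjstar, mulVec_cycleAdj _ hnodup]
    refine ⟨fun j => c' j + if j = jstar then ε else 0, ?_, ?_⟩
    · intro j
      have := hc'nn j
      dsimp only
      split <;> linarith [hεpos.le]
    · have hAsplit : A.mulVec 1 = A'.mulVec 1 + ε • cycleVec l := by
        have : A = A' + ε • cycleAdj l := by rw [hA', sub_add_cancel]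
        rw [this, Matrix.add_mulVec, Matrix.smul_mulVec, mulVec_cycleAdj l hnodup]
      rw [hAsplit, hc']
      have : ∀ j, (c' j + if j = jstar then ε else 0) • cycleVec (C j)
          = c' j • cycleVec (C j) + (if j = jstar then ε • cycleVec (C j) else 0) := by
        intro j
        rw [add_smul]
        congr 1
        split <;> simp
      simp only [this]
      rw [Finset.sum_add_distrib, Finset.sum_ite_eq' Finset.univ jstar
        (fun j => ε • cycleVec (C j))]
      simp [hvec]


/-- The node-flow cone `𝖷` (the convex cone generated by the node-cycle incidence vectors of
the cycles `C 1, …, C k` of `S`) equals `{ A𝟙 : A ∈ 𝖠 }`, where `𝖠` is the edge-flow cone. -/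
theorem nodeFlowCone_eq_mulVec_edgeFlowCone {m k : ℕ} (E : Fin m → Fin m → Prop)
    (C : Fin k → List (Fin m))
    (hC : ∀ j, IsDiCycle E (C j))
    (hall : ∀ l, IsDiCycle E l → ∃ j, cycleAdj (C j) = cycleAdj l) :
    {x : Fin m → ℝ | ∃ c : Fin k → ℝ, (∀ j, 0 ≤ c j) ∧ x = ∑ j, c j • cycleVec (C j)}
      = {x : Fin m → ℝ | ∃ A : Matrix (Fin m) (Fin m) ℝ,
          ((∀ i j, 0 ≤ A i j) ∧ (∀ i j, A i j ≠ 0 → E i j) ∧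
            A.transpose.mulVec 1 = A.mulVec 1) ∧ x = A.mulVec 1} := by
  ext x
  simp only [Set.mem_setOf_eq]
  constructor
  · rintro ⟨c, hcnn, rfl⟩
    refine ⟨∑ j, c j • cycleAdj (C j), ⟨?_, ?_, ?_⟩, ?_⟩
    · intro a b
      have : (∑ j, c j • cycleAdj (C j)) a b = ∑ j, c j * cycleAdj (C j) a b := by
        simp [Matrix.sum_apply, Matrix.smul_apply, smul_eq_mul]
      rw [this]
      exact Finset.sum_nonneg fun j _ => mul_nonneg (hcnn j) (cycleAdj_nonneg _ _ _)
    · intro a b hab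
      have : (∑ j, c j • cycleAdj (C j)) a b = ∑ j, c j * cycleAdj (C j) a b := by
        simp [Matrix.sum_apply, Matrix.smul_apply, smul_eq_mul]
      rw [this] at hab
      obtain ⟨j, -, hj⟩ := Finset.exists_ne_zero_of_sum_ne_zero hab
      have hadj : cycleAdj (C j) a b ≠ 0 := fun h => hj (by rw [h, mul_zero])
      rw [cycleAdj_apply] at hadj
      rcases Classical.em (∃ i, (C j).get i = a ∧ (C j).get (nxt (C j) i) = b) with h | h
      · obtain ⟨i, h1, h2⟩ := h
        have := (hC j).2.2 i
        rw [h1] at this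
        rw [← h2]
        exact this
      · exact absurd (if_neg h) hadj
    · rw [Matrix.transpose_sum]
      simp only [Matrix.transpose_smul]
      rw [sum_mulVec', sum_mulVec']
      congr 1
      funext j
      rw [Matrix.smul_mulVec, Matrix.smul_mulVec,
        transpose_mulVec_cycleAdj _ (hC j).2.1, mulVec_cycleAdj _ (hC j).2.1]
    · rw [sum_mulVec']
      congr 1
      funext j
      rw [Matrix.smul_mulVec, mulVec_cycleAdj _ (hC j).2.1]
  · rintro ⟨A, ⟨hnn, hsupp, hbal⟩, rfl⟩
    exact decompose E C hC hall _ A rfl hnn hsupp hbal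
end

section
/- Let S be a digraph on m ≥ 1 nodes without self-loops and let y ∈ ℕ^m be expressible as y = Σ_{j=1}^k c_j z_j where c_j ∈ ℕ₀ and z_j are the node-cycle incidence vectors of the directed cycles C_1,...,C_k of S. Then the complete S-partite digraph K_y has a node-wise Hamiltonian decomposition containing, for each j, exactly c_j cycles that map isomorphically onto C_j under the projection π : K_y → S. -/
lemma card_aux {k : ℕ} (c : Fin k → ℕ) (P : Fin k → Prop) [DecidablePred P] :
    Fintype.card {p : (j : Fin k) × Fin (c j) // P p.1} =
      ∑ j, c j * (if P j then 1 else 0) := by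
  rw [Fintype.card_congr (Equiv.subtypeSigmaEquiv (fun j => Fin (c j)) P)]
  simp only [Fintype.card_sigma, Fintype.card_fin, mul_ite, mul_one, mul_zero,
    ← Finset.subtype_univ, Finset.sum_subtype_eq_sum_filter, Finset.sum_filter]

/-- If `S` is loop free and `y = ∑ j, c j • z j` with `c j ∈ ℕ`, then the complete
`S`-partite digraph `K_y` (with vertex type `(i : Fin m) × Fin (y i)`, projection
`Sigma.fst`, and an edge `v → w` iff `v.1 w.1` is an edge of `S`) has a node-wise
Hamiltonian decomposition consisting, for each `j`, of exactly `c j` cycles that project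
under `π = Sigma.fst` to a rotation of `C j` (i.e. map isomorphically onto `C j`). -/
theorem completeSPartite_hamDecomp {m k : ℕ} (hm : 1 ≤ m)
    (E : Fin m → Fin m → Prop) (hloopless : ∀ i, ¬ E i i)
    (C : Fin k → List (Fin m))
    (hC : ∀ j, IsDiCycle E (C j))
    (hall : ∀ l, IsDiCycle E l → ∃ j, cycleAdj (C j) = cycleAdj l)
    (c : Fin k → ℕ) (y : Fin m → ℕ)
    (hy : ∀ i, y i = ∑ j, c j * (if i ∈ C j then 1 else 0)) :
    ∃ D : (j : Fin k) → Fin (c j) → List ((i : Fin m) × Fin (y i)),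
      (∀ j t, IsDiCycle (fun v w : (i : Fin m) × Fin (y i) => E v.1 w.1) (D j t)) ∧
      (∀ j t, ∃ r : ℕ, (D j t).map Sigma.fst = (C j).rotate r) ∧
      (∀ v : (i : Fin m) × Fin (y i), ∃! p : (j : Fin k) × Fin (c j), v ∈ D p.1 p.2) := by
  -- the fiber-assigning equivalence
  have hcard : ∀ i : Fin m,
      Fintype.card {p : (j : Fin k) × Fin (c j) // i ∈ C p.1} = y i := fun i => by
    rw [hy i]; exact card_aux c (fun j => i ∈ C j)
  let e : ∀ i : Fin m, {p : (j : Fin k) × Fin (c j) // i ∈ C p.1} ≃ Fin (y i) :=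
    fun i => Fintype.equivFinOfCardEq (hcard i)
  refine ⟨fun j t => (C j).attach.map
      (fun a => ⟨a.1, e a.1 ⟨⟨j, t⟩, a.2⟩⟩), ?_, ?_, ?_⟩
  · intro j t
    obtain ⟨hne, hnd, hcyc⟩ := hC j
    refine ⟨?_, ?_, ?_⟩
    · simp [hne]
    · refine List.Nodup.map ?_ ((List.nodup_attach).2 hnd)
      intro a b hab
      exact Subtype.ext (congrArg Sigma.fst hab)
    · intro i
      have hi2 : i.1 < (C j).length := by simpa using i.2
      simp only [List.get_eq_getElem, List.getElem_map, List.getElem_attach,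
        List.length_map, List.length_attach]
      exact hcyc ⟨i.1, hi2⟩
  · intro j t
    refine ⟨0, ?_⟩
    rw [List.rotate_zero, List.map_map]
    exact List.attach_map_subtype_val (C j)
  · rintro ⟨i, s⟩
    refine ⟨((e i).symm s).1, ?_, ?_⟩
    · refine List.mem_map.mpr ⟨⟨i, ((e i).symm s).2⟩, List.mem_attach _ _, ?_⟩
      show (⟨i, e i ⟨((e i).symm s).1, ((e i).symm s).2⟩⟩ : (i : Fin m) × Fin (y i)) = ⟨i, s⟩
      congr 1
      rw [show (⟨((e i).symm s).1, ((e i).symm s).2⟩ : {p // i ∈ C p.1}) = (e i).symm s from rfl,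
        Equiv.apply_symm_apply]
    · rintro ⟨j', t'⟩ hmem
      simp only [List.mem_map] at hmem
      obtain ⟨a, -, ha⟩ := hmem
      obtain ⟨h1, h2⟩ := Sigma.mk.inj_iff.1 ha
      subst h1
      have h2' : e a.1 ⟨⟨j', t'⟩, a.2⟩ = s := eq_of_heq h2
      have : (⟨⟨j', t'⟩, a.2⟩ : {p : (j : Fin k) × Fin (c j) // a.1 ∈ C p.1}) = (e a.1).symm s := by
        rw [← h2', Equiv.symm_apply_apply]
      exact congrArg Subtype.val this
end

section
/- Let S be a strongly connected digraph on m ≥ 2 nodes without self-loops, with directed cycles C_1,...,C_k and node-cycle incidence vectors z_1,...,z_k. If y = Σ_{j=1}^k c_j z_j with all c_j strictly positive integers, then the complete S-partite digraph K_y has a Hamiltonian cycle. -/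
open List

set_option linter.deprecated false in
lemma chain_cons_compat {α : Type*} {R : α → α → Prop} {a b : α} {l : List α} :
    List.Chain R a (b :: l) ↔ R a b ∧ List.Chain R b l :=
  List.isChain_cons_cons

set_option linter.deprecated false in
lemma chain_split_compat {α : Type*} {R : α → α → Prop} {a b : α} {l₁ l₂ : List α} :
    List.Chain R a (l₁ ++ b :: l₂) ↔ List.Chain R a (l₁ ++ [b]) ∧ List.Chain R b l₂ :=
  List.isChain_cons_split

set_option linter.deprecated false in
lemma chain_singleton_compat {α : Type*} {R : α → α → Prop} {a b : α} :
    List.Chain R a [b] ↔ R a b :=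
  List.isChain_pair

set_option linter.deprecated false in
lemma chain_iff_get_compat {α : Type*} {R : α → α → Prop} {a : α} {l : List α} :
    List.Chain R a l ↔ (∀ h : 0 < l.length, R a (l.get ⟨0, h⟩)) ∧
      ∀ (i : ℕ) (h : i < l.length - 1), R (l.get ⟨i, by omega⟩) (l.get ⟨i + 1, by omega⟩) := by
  show IsChain R (a :: l) ↔ _
  rw [List.isChain_iff_getElem]
  constructor
  · intro h
    exact ⟨fun h0 => by simpa using h 0 (by simp; omega),
      fun i hi => h (i + 1) (by simp; omega)⟩
  · rintro ⟨h0, hs⟩ i hi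
    cases i with
    | zero => simpa using h0 (by simp at hi; omega)
    | succ i => simpa using hs i (by simp at hi; omega)

/-- cyclic edge condition -/
def Cyc {α : Type*} (E : α → α → Prop) (l : List α) : Prop :=
  ∀ i : Fin l.length, E (l.get i) (l.get ⟨(i.1 + 1) % l.length, Nat.mod_lt _ i.pos⟩)

lemma get_append_cycle {α : Type*} (a : α) (t : List α) (i : ℕ) (h : i < t.length + 1) :
    (t ++ [a]).get ⟨i, by simp [h]⟩ =
      (a :: t).get ⟨(i + 1) % (t.length + 1), Nat.mod_lt _ (Nat.succ_pos _)⟩ := by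
  rcases lt_or_eq_of_le (Nat.lt_succ_iff.mp h) with h' | h'
  · have hmod : (i + 1) % (t.length + 1) = i + 1 := Nat.mod_eq_of_lt (by omega)
    simp only [List.get_eq_getElem]
    rw [List.getElem_append_left (by omega)]
    simp [hmod]
  · subst h'
    simp only [List.get_eq_getElem]
    rw [List.getElem_append_right (by omega)]
    simp

lemma cyc_iff_chain {α : Type*} (E : α → α → Prop) (a : α) (t : List α) :
    Cyc E (a :: t) ↔ List.Chain E a (t ++ [a]) := by
  rw [chain_iff_get_compat]
  constructor
  · intro h
    refine ⟨fun hl => ?_, fun i hi => ?_⟩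
    · rw [get_append_cycle a t 0 (Nat.succ_pos _)]
      exact h ⟨0, Nat.succ_pos _⟩
    · simp only [List.length_append, List.length_cons, List.length_nil] at hi
      have hi' : i < t.length := by omega
      rw [get_append_cycle a t i (by omega), get_append_cycle a t (i+1) (by omega)]
      have hmod : (i + 1) % (t.length + 1) = i + 1 := Nat.mod_eq_of_lt (by omega)
      have e1 : (⟨(i + 1) % (t.length + 1), Nat.mod_lt _ (Nat.succ_pos _)⟩ :
          Fin (a :: t).length) = ⟨i + 1, by simp; omega⟩ := Fin.ext hmod
      rw [e1]
      exact h ⟨i + 1, by simp; omega⟩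
  · rintro ⟨h0, hs⟩ ⟨i, hi⟩
    simp only [List.length_cons] at hi
    match i with
    | 0 =>
      have := h0 (by simp)
      rw [get_append_cycle a t 0 (Nat.succ_pos _)] at this
      simpa using this
    | Nat.succ i' =>
      have hi' : i' < t.length := by omega
      have := hs i' (by simp; omega)
      rw [get_append_cycle a t i' (by omega), get_append_cycle a t (i'+1) (by omega)] at this
      have hmod : (i' + 1) % (t.length + 1) = i' + 1 := Nat.mod_eq_of_lt (by omega)
      have e1 : (⟨(i' + 1) % (t.length + 1), Nat.mod_lt _ (Nat.succ_pos _)⟩ :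
          Fin (a :: t).length) = ⟨i' + 1, by simp; omega⟩ := Fin.ext hmod
      rw [e1] at this
      exact this

/-- closed walk in chain form -/
def CW {α : Type*} (E : α → α → Prop) (l : List α) : Prop :=
  ∃ a t, l = a :: t ∧ List.Chain E a (t ++ [a])

lemma cw_to_head_aux {α : Type*} {E : α → α → Prop} :
    ∀ (n : ℕ) (l : List α), CW E l → ∀ (hn : n < l.length),
      ∃ t, (l.get ⟨n, hn⟩ :: t) ~ l ∧ List.Chain E (l.get ⟨n, hn⟩) (t ++ [l.get ⟨n, hn⟩]) := by
  intro n
  induction n with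
  | zero =>
    rintro l ⟨a, t, rfl, hch⟩ hn
    exact ⟨t, List.Perm.refl _, hch⟩
  | succ n IH =>
    rintro l ⟨a, t, rfl, hch⟩ hn
    simp only [List.length_cons] at hn
    match t, hch, hn with
    | b :: t', hch, hn =>
      rw [List.cons_append, chain_cons_compat] at hch
      obtain ⟨hab, hch'⟩ := hch
      have hcw1 : CW E (b :: (t' ++ [a])) := by
        refine ⟨b, t' ++ [a], rfl, ?_⟩
        have h1 : t' ++ [a] ++ [b] = t' ++ a :: [b] := by simp
        rw [h1, chain_split_compat]
        exact ⟨by simpa using hch', chain_singleton_compat.mpr hab⟩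
      have hlen1 : n < (b :: (t' ++ [a])).length := by simp; simp at hn; omega
      obtain ⟨t2, hperm, hch2⟩ := IH _ hcw1 hlen1
      have hrot : b :: (t' ++ [a]) = (a :: b :: t').rotate 1 := by
        simp [List.rotate_cons_succ]
      have hget : (b :: (t' ++ [a])).get ⟨n, hlen1⟩
          = (a :: b :: t').get ⟨n + 1, by simpa using hn⟩ := by
        simp only [List.get_eq_getElem]
        rcases n with _ | n''
        · rfl
        · simp only [List.getElem_cons_succ]
          rw [List.getElem_append_left (by simp at hn ⊢; omega)]
      rw [hget] at hperm hch2
      refine ⟨t2, ?_, hch2⟩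
      refine hperm.trans ?_
      calc b :: (t' ++ [a]) ~ b :: (a :: t') :=
            List.Perm.cons b (List.perm_append_singleton a t')
        _ ~ a :: b :: t' := List.Perm.swap a b t'

lemma cw_to_head {α : Type*} {E : α → α → Prop} {l : List α} (h : CW E l) {x : α} (hx : x ∈ l) :
    ∃ t, (x :: t) ~ l ∧ List.Chain E x (t ++ [x]) := by
  obtain ⟨i, hi⟩ := List.mem_iff_get.mp hx
  obtain ⟨t, h1, h2⟩ := cw_to_head_aux i.1 l h i.2
  rw [Fin.eta] at h1 h2
  rw [hi] at h1 h2
  exact ⟨t, h1, h2⟩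

lemma cw_splice {α : Type*} {E : α → α → Prop} {l1 l2 : List α} (h1 : CW E l1) (h2 : CW E l2)
    {x : α} (hx1 : x ∈ l1) (hx2 : x ∈ l2) :
    ∃ l, CW E l ∧ l ~ (l1 ++ l2) := by
  obtain ⟨t1, hp1, hc1⟩ := cw_to_head h1 hx1
  obtain ⟨t2, hp2, hc2⟩ := cw_to_head h2 hx2
  refine ⟨x :: (t1 ++ x :: t2), ⟨x, t1 ++ x :: t2, rfl, ?_⟩, ?_⟩
  · have h1' : (t1 ++ x :: t2) ++ [x] = t1 ++ x :: (t2 ++ [x]) := by simp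
    rw [h1', chain_split_compat]
    exact ⟨hc1, hc2⟩
  · have h2' : x :: (t1 ++ x :: t2) = (x :: t1) ++ (x :: t2) := by simp
    rw [h2']
    exact List.Perm.append hp1 hp2

lemma exists_path {α : Type*} {E : α → α → Prop} {a b : α} (h : Relation.ReflTransGen E a b) :
    ∃ q : List α, List.Chain E a q ∧ (a :: q).getLast? = some b ∧
      (a :: q).Nodup := by
  induction h using Relation.ReflTransGen.head_induction_on with
  | refl => exact ⟨[], List.Chain.nil, rfl, List.nodup_singleton _⟩
  | @head a c hac hcb IH =>
    obtain ⟨q, hq, hlast, hnd⟩ := IH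
    by_cases hmem : a ∈ c :: q
    · obtain ⟨s, t, hst⟩ := List.append_of_mem hmem
      rcases s with _ | ⟨x, s'⟩
      · simp only [List.nil_append, List.cons.injEq] at hst
        obtain ⟨h1, h2⟩ := hst
        subst h1; subst h2
        exact ⟨_, hq, hlast, hnd⟩
      · rw [List.cons_append, List.cons.injEq] at hst
        obtain ⟨h1, h2⟩ := hst
        subst h2
        rw [chain_split_compat] at hq
        refine ⟨t, hq.2, ?_, ?_⟩
        · rw [← hlast]
          have he : c :: (s' ++ a :: t) = (c :: s') ++ (a :: t) := by simp
          rw [he]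
          exact (List.getLast?_append_cons (c :: s') a t).symm
        · have hsuf : (a :: t) <:+ (c :: (s' ++ a :: t)) := ⟨c :: s', by simp⟩
          exact hnd.sublist hsuf.sublist
    · refine ⟨c :: q, List.chain_cons.mpr ⟨hac, hq⟩, ?_, ?_⟩
      · rw [List.getLast?_cons_cons]
        exact hlast
      · exact hnd.cons hmem

lemma cycleAdj_mem {m : ℕ} (l : List (Fin m)) (x : Fin m) :
    x ∈ l ↔ ∃ b, cycleAdj l x b = 1 := by
  constructor
  · intro hx
    obtain ⟨i, hi⟩ := List.mem_iff_get.mp hx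
    refine ⟨l.get ⟨(i.1 + 1) % l.length, Nat.mod_lt _ i.pos⟩, ?_⟩
    rw [cycleAdj, Matrix.of_apply, if_pos ⟨i, hi, rfl⟩]
  · rintro ⟨b, hb⟩
    rw [cycleAdj, Matrix.of_apply] at hb
    by_cases hcond : ∃ i : Fin l.length,
        l.get i = x ∧ l.get ⟨(i.1 + 1) % l.length, Nat.mod_lt _ i.pos⟩ = b
    · obtain ⟨i, hi, _⟩ := hcond
      have hm := List.get_mem l i
      exact hi ▸ hm
    · rw [if_neg hcond] at hb
      norm_num at hb

lemma cycleAdj_mem_iff {m : ℕ} {l l' : List (Fin m)} (h : cycleAdj l = cycleAdj l') (x : Fin m) :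
    x ∈ l ↔ x ∈ l' := by
  rw [cycleAdj_mem, cycleAdj_mem, h]

lemma first_exit {α : Type*} {E : α → α → Prop} (A : α → Prop) {a b : α}
    (h : Relation.ReflTransGen E a b) (ha : A a) (hb : ¬ A b) :
    ∃ u v, E u v ∧ A u ∧ ¬ A v := by
  induction h using Relation.ReflTransGen.head_induction_on with
  | refl => exact absurd ha hb
  | @head a c hac hcb IH =>
    by_cases hc : A c
    · exact IH hc
    · exact ⟨a, c, hac, ha, hc⟩

lemma chain_close {α : Type*} {R : α → α → Prop} :
    ∀ (l : List α) (a x : α), List.Chain R a l →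
      (∀ u, (a :: l).getLast? = some u → R u x) → List.Chain R a (l ++ [x])
  | [], a, x, _, h => chain_singleton_compat.mpr (h a rfl)
  | b :: l, a, x, hch, h => by
    rw [chain_cons_compat] at hch
    rw [List.cons_append, chain_cons_compat]
    exact ⟨hch.1, chain_close l b x hch.2 (fun u hu => h u (by rw [List.getLast?_cons_cons]; exact hu))⟩

lemma exists_dicycle_thru {m : ℕ} {E : Fin m → Fin m → Prop}
    (hconn : ∀ a b : Fin m, Relation.ReflTransGen E a b)
    {u v : Fin m} (huv : E u v) :
    ∃ l, IsDiCycle E l ∧ u ∈ l ∧ v ∈ l := by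
  obtain ⟨q, hq, hlast, hnd⟩ := exists_path (hconn v u)
  refine ⟨v :: q, ⟨List.cons_ne_nil _ _, hnd, ?_⟩, ?_, List.mem_cons_self⟩
  · exact (cyc_iff_chain E v q).mpr
      (chain_close q v v hq (fun u' hu' => by
        rw [hlast] at hu'
        injection hu' with h
        rw [← h]
        exact huv))
  · obtain ⟨h1, h2⟩ := List.mem_getLast?_eq_getLast (by rw [hlast]; rfl)
    exact h2 ▸ List.getLast_mem h1

lemma cw_of_dicycle {m : ℕ} {E : Fin m → Fin m → Prop} {l : List (Fin m)}
    (h : IsDiCycle E l) : CW E l := by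
  obtain ⟨hne, _, hcyc⟩ := h
  match l, hne with
  | a :: t, _ => exact ⟨a, t, rfl, (cyc_iff_chain E a t).mp hcyc⟩

lemma count_nodup {m : ℕ} {l : List (Fin m)} (h : l.Nodup) (i : Fin m) :
    l.count i = if i ∈ l then 1 else 0 := by
  by_cases hi : i ∈ l
  · rw [if_pos hi]
    exact List.count_eq_one_of_mem h hi
  · rw [if_neg hi]
    exact List.count_eq_zero_of_not_mem hi

lemma build_walk {m k : ℕ} {E : Fin m → Fin m → Prop}
    (hconn : ∀ a b : Fin m, Relation.ReflTransGen E a b)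
    {C : Fin k → List (Fin m)} (hC : ∀ j, IsDiCycle E (C j))
    (hall : ∀ l, IsDiCycle E l → ∃ j, cycleAdj (C j) = cycleAdj l)
    {c : Fin k → ℕ} (hcpos : ∀ j, 1 ≤ c j) {y : Fin m → ℕ}
    (hy : ∀ i, y i = ∑ j, c j * (if i ∈ C j then 1 else 0)) :
    ∀ (n : ℕ) (r : Fin k → ℕ), (∀ j, r j ≤ c j) → (∑ j, r j) = n →
      ∀ W : List (Fin m), CW E W →
        (∀ i, W.count i + ∑ j, r j * (if i ∈ C j then 1 else 0) = y i) →
      ∃ W', CW E W' ∧ ∀ i, W'.count i = y i := by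
  intro n
  induction n with
  | zero =>
    intro r hrc hsum W hW hcount
    have hr0 : ∀ j, r j = 0 := fun j =>
      Finset.sum_eq_zero_iff.mp hsum j (Finset.mem_univ j)
    refine ⟨W, hW, fun i => ?_⟩
    have h := hcount i
    simp only [hr0, zero_mul, Finset.sum_const_zero, add_zero] at h
    exact h
  | succ n IH =>
    intro r hrc hsum W hW hcount
    have hWne : W ≠ [] := by obtain ⟨a, t, rfl, -⟩ := hW; exact List.cons_ne_nil _ _
    have haW : W.head hWne ∈ W := List.head_mem hWne
    have hex : ∃ j x, 0 < r j ∧ x ∈ C j ∧ x ∈ W := by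
      by_contra hno
      push_neg at hno
      obtain ⟨j1, hj1⟩ : ∃ j1, 0 < r j1 := by
        by_contra h'
        push_neg at h'
        have h0 : ∑ j, r j = 0 :=
          Finset.sum_eq_zero (fun j _ => Nat.le_zero.mp (h' j))
        omega
      obtain ⟨b, hb⟩ : ∃ b, b ∈ C j1 := List.exists_mem_of_ne_nil _ (hC j1).1
      have hbW : b ∉ W := hno j1 b hj1 hb
      obtain ⟨u, v, huv, huW, hvW⟩ := first_exit (fun x => x ∈ W) (hconn _ b) haW hbW
      obtain ⟨l0, hl0, hul0, hvl0⟩ := exists_dicycle_thru hconn huv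
      obtain ⟨j2, hj2⟩ := hall l0 hl0
      have humem : u ∈ C j2 := (cycleAdj_mem_iff hj2 u).mpr hul0
      have hvmem : v ∈ C j2 := (cycleAdj_mem_iff hj2 v).mpr hvl0
      have hrj2 : 0 < r j2 := by
        by_contra hr2
        push_neg at hr2
        have hcv := hcount v
        have hcv0 : W.count v = 0 := List.count_eq_zero_of_not_mem hvW
        rw [hcv0, zero_add, hy v] at hcv
        have hc2 := hcpos j2
        have hlt : ∑ j, r j * (if v ∈ C j then 1 else 0)
            < ∑ j, c j * (if v ∈ C j then 1 else 0) := by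
          apply Finset.sum_lt_sum (fun j _ => Nat.mul_le_mul_right _ (hrc j))
          exact ⟨j2, Finset.mem_univ _, by simp only [hvmem, if_pos]; omega⟩
        omega
      exact hno j2 u hrj2 humem huW
    obtain ⟨j, x, hrj, hxC, hxW⟩ := hex
    obtain ⟨W', hW', hperm⟩ := cw_splice hW (cw_of_dicycle (hC j)) hxW hxC
    have keysum : ∀ (g : Fin k → ℕ) (d : Fin k → ℕ),
        ∑ j', g j' * d j' = g j * d j + ∑ j' ∈ Finset.univ.erase j, g j' * d j' :=
      fun g d => (Finset.add_sum_erase _ _ (Finset.mem_univ j)).symm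
    have keyupd : ∀ (v : ℕ) (d : Fin k → ℕ),
        ∑ j', (Function.update r j v) j' * d j'
          = v * d j + ∑ j' ∈ Finset.univ.erase j, r j' * d j' := by
      intro v d
      rw [← Finset.add_sum_erase _ _ (Finset.mem_univ j), Function.update_self]
      congr 1
      exact Finset.sum_congr rfl
        (fun j' hj' => by rw [Function.update_of_ne (Finset.ne_of_mem_erase hj')])
    apply IH (Function.update r j (r j - 1)) ?_ ?_ W' hW' ?_
    · intro j'
      by_cases h : j' = j
      · subst h; rw [Function.update_self]; have := hrc j'; omega
      · rw [Function.update_of_ne h]; exact hrc j'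
    · have h1 := keyupd (r j - 1) (fun _ => 1)
      have h2 := keysum r (fun _ => 1)
      simp only [mul_one] at h1 h2
      rw [h1]
      rw [h2] at hsum
      omega
    · intro i
      have hcnt : W'.count i = W.count i + (C j).count i := by
        rw [hperm.count_eq, List.count_append]
      rw [hcnt, count_nodup (hC j).2.1 i]
      have hc := hcount i
      rw [keyupd (r j - 1) (fun j' => if i ∈ C j' then 1 else 0)]
      rw [keysum r (fun j' => if i ∈ C j' then 1 else 0)] at hc
      by_cases hiC : i ∈ C j
      · simp only [hiC, if_pos, mul_one] at hc ⊢
        omega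
      · simp only [hiC, if_neg, mul_zero, not_false_iff] at hc ⊢
        omega

lemma count_take_lt {α : Type*} [DecidableEq α] (W : List α) (p : ℕ) (hp : p < W.length) :
    (W.take p).count (W.get ⟨p, hp⟩) < W.count (W.get ⟨p, hp⟩) := by
  have hmem : W.get ⟨p, hp⟩ ∈ W.drop p := by
    rw [List.drop_eq_getElem_cons hp]
    exact List.mem_cons_self
  have e : W.take p ++ W.drop p = W := List.take_append_drop p W
  calc (W.take p).count (W.get ⟨p, hp⟩)
      < (W.take p).count (W.get ⟨p, hp⟩) + (W.drop p).count (W.get ⟨p, hp⟩) := by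
        have := List.count_pos_iff.mpr hmem
        omega
    _ = (W.take p ++ W.drop p).count (W.get ⟨p, hp⟩) := List.count_append.symm
    _ = W.count (W.get ⟨p, hp⟩) := by rw [e]

lemma count_take_strict {α : Type*} [DecidableEq α] (W : List α) {p q : ℕ}
    (hpq : p < q) (hq : q ≤ W.length) (a : α) (ha : W.get ⟨p, by omega⟩ = a) :
    (W.take p).count a < (W.take q).count a := by
  have h1 : W.take (p + 1) = W.take p ++ [a] := by
    rw [← ha]
    simp only [List.get_eq_getElem]
    exact (List.take_concat_get' W p (by omega)).symm
  have h2 : (W.take (p+1)).count a ≤ (W.take q).count a := by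
    apply List.Sublist.count_le
    have : W.take (p+1) = (W.take q).take (p+1) := by
      rw [List.take_take]
      congr 1
      omega
    rw [this]
    exact List.take_sublist _ _
  rw [h1, List.count_append] at h2
  simp at h2
  omega

lemma exists_occurrence {α : Type*} [DecidableEq α] :
    ∀ (W : List α) (a : α) (t : ℕ), t < W.count a →
      ∃ (p : ℕ) (hp : p < W.length), W.get ⟨p, hp⟩ = a ∧ (W.take p).count a = t := by
  intro W
  induction W with
  | nil => intro a t ht; simp at ht
  | cons b W' IHW =>
    intro a t ht
    by_cases hba : b = a
    · subst hba
      match t with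
      | 0 => exact ⟨0, by simp, rfl, by simp⟩
      | Nat.succ t' =>
        rw [List.count_cons_self] at ht
        obtain ⟨p', hp', hget, hcnt⟩ := IHW b t' (by omega)
        refine ⟨p' + 1, by simp; omega, hget, ?_⟩
        rw [List.take_succ_cons, List.count_cons_self, hcnt]
    · rw [List.count_cons_of_ne hba] at ht
      obtain ⟨p', hp', hget, hcnt⟩ := IHW a t ht
      refine ⟨p' + 1, by simp; omega, hget, ?_⟩
      rw [List.take_succ_cons, List.count_cons_of_ne hba, hcnt]

/-- If `S` is a strongly connected loop-free digraph on `m ≥ 2` nodes, with directed cycles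
`C 1, …, C k`, and `y = ∑ j, c j • z j` with every `c j` a strictly positive integer, then
the complete `S`-partite digraph `K_y` has a Hamiltonian cycle. -/
theorem completeSPartite_hamCycle {m k : ℕ} (hm : 2 ≤ m)
    (E : Fin m → Fin m → Prop) (hloopless : ∀ i, ¬ E i i)
    (hconn : ∀ a b : Fin m, Relation.ReflTransGen E a b)
    (C : Fin k → List (Fin m))
    (hC : ∀ j, IsDiCycle E (C j))
    (hall : ∀ l, IsDiCycle E l → ∃ j, cycleAdj (C j) = cycleAdj l)
    (c : Fin k → ℕ) (hcpos : ∀ j, 1 ≤ c j) (y : Fin m → ℕ)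
    (hy : ∀ i, y i = ∑ j, c j * (if i ∈ C j then 1 else 0)) :
    ∃ l : List ((i : Fin m) × Fin (y i)),
      IsDiCycle (fun v w : (i : Fin m) × Fin (y i) => E v.1 w.1) l ∧
      ∀ v : (i : Fin m) × Fin (y i), v ∈ l := by
  -- find a starting cycle index j0
  have h01 : (⟨0, by omega⟩ : Fin m) ≠ ⟨1, by omega⟩ := by
    intro h
    have := congrArg Fin.val h
    simp at this
  obtain ⟨c0, hc0, -⟩ : ∃ c0, E ⟨0, by omega⟩ c0 ∧
      Relation.ReflTransGen E c0 ⟨1, by omega⟩ := by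
    rcases Relation.ReflTransGen.cases_head (hconn ⟨0, by omega⟩ ⟨1, by omega⟩) with h | h
    · exact absurd h h01
    · exact h
  obtain ⟨l0, hl0, -, -⟩ := exists_dicycle_thru hconn hc0
  obtain ⟨j0, -⟩ := hall l0 hl0
  -- initial configuration
  have keyupd : ∀ (v : ℕ) (d : Fin k → ℕ),
      ∑ j', (Function.update c j0 v) j' * d j'
        = v * d j0 + ∑ j' ∈ Finset.univ.erase j0, c j' * d j' := by
    intro v d
    rw [← Finset.add_sum_erase _ _ (Finset.mem_univ j0), Function.update_self]
    congr 1
    exact Finset.sum_congr rfl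
      (fun j' hj' => by rw [Function.update_of_ne (Finset.ne_of_mem_erase hj')])
  have keysum : ∀ (d : Fin k → ℕ),
      ∑ j', c j' * d j' = c j0 * d j0 + ∑ j' ∈ Finset.univ.erase j0, c j' * d j' :=
    fun d => (Finset.add_sum_erase _ _ (Finset.mem_univ j0)).symm
  obtain ⟨W, hWcw, hWcount⟩ :=
    build_walk hconn hC hall hcpos hy (∑ j, Function.update c j0 (c j0 - 1) j)
      (Function.update c j0 (c j0 - 1))
      (fun j => by
        by_cases h : j = j0
        · subst h; rw [Function.update_self]; omega
        · rw [Function.update_of_ne h])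
      rfl (C j0) (cw_of_dicycle (hC j0))
      (fun i => by
        rw [count_nodup (hC j0).2.1 i, keyupd (c j0 - 1) (fun j' => if i ∈ C j' then 1 else 0),
          hy i, keysum (fun j' => if i ∈ C j' then 1 else 0)]
        have := hcpos j0
        by_cases hiC : i ∈ C j0
        · simp only [hiC, if_pos, mul_one]
          omega
        · simp only [hiC, if_neg, mul_zero, not_false_iff]
          omega)
  -- lift the closed walk W to a Hamiltonian cycle
  have hWne : W ≠ [] := by obtain ⟨a, t, rfl, -⟩ := hWcw; exact List.cons_ne_nil _ _
  have hcyc : Cyc E W := by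
    obtain ⟨a, t, rfl, hch⟩ := hWcw
    exact (cyc_iff_chain E a t).mpr hch
  have hpf : ∀ p : Fin W.length, (W.take p.1).count (W.get p) < y (W.get p) := by
    intro p
    rw [← hWcount]
    exact count_take_lt W p.1 p.2
  let f : Fin W.length → (i : Fin m) × Fin (y i) :=
    fun p => ⟨W.get p, ⟨(W.take p.1).count (W.get p), hpf p⟩⟩
  have hL : (List.ofFn f).length = W.length := List.length_ofFn
  have key : ∀ (u v : Fin W.length), v.1 = (u.1 + 1) % W.length → E (W.get u) (W.get v) := by
    intro u v hv
    have h := hcyc u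
    have ev : v = ⟨(u.1 + 1) % W.length, Nat.mod_lt _ u.pos⟩ := Fin.ext hv
    rw [ev]
    exact h
  refine ⟨List.ofFn f, ⟨?_, ?_, ?_⟩, ?_⟩
  · intro h
    apply hWne
    have hh := congrArg List.length h
    rw [hL] at hh
    simp only [List.length_nil] at hh
    exact List.length_eq_zero_iff.mp hh
  · rw [List.nodup_ofFn]
    intro p q h
    have h1 : W.get p = W.get q := congrArg Sigma.fst h
    have h2 : (W.take p.1).count (W.get p) = (W.take q.1).count (W.get q) := by
      have h5 := (Sigma.mk.inj_iff.mp h).2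
      have h3 : y (W.get p) = y (W.get q) := by rw [h1]
      exact (Fin.heq_ext_iff h3).mp h5
    rw [h1] at h2
    rcases Nat.lt_trichotomy p.1 q.1 with hlt | heq | hgt
    · exfalso
      have := count_take_strict W hlt (le_of_lt q.2) (W.get p)
        (congrArg W.get (Fin.ext rfl))
      rw [h1] at this
      omega
    · exact Fin.ext heq
    · exfalso
      have := count_take_strict W hgt (le_of_lt p.2) (W.get q)
        (congrArg W.get (Fin.ext rfl))
      omega
  · intro i
    rw [List.get_ofFn, List.get_ofFn]
    exact key _ _ (by simp)
  · rintro ⟨i, t⟩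
    rw [List.mem_ofFn]
    obtain ⟨p, hp, hget, hcnt⟩ := exists_occurrence W i t.1 (by rw [hWcount]; exact t.2)
    refine ⟨⟨p, hp⟩, ?_⟩
    have ht2 := t.2
    subst hget
    exact congrArg (Sigma.mk _) (Fin.ext hcnt)
end

section
/- Let S be a directed cycle u_1 u_2 ... u_m u_1 with m ≥ 2 nodes, and let c ≥ 1 be an integer. Then the complete S-partite digraph K_y with y = (c, c, ..., c) (each fiber of size c) has a Hamiltonian cycle. -/
/-- Let `S` be the directed cycle `u_1 u_2 ⋯ u_m u_1` on `m ≥ 2` nodes (edge `u_i → u_j`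
iff `j ≡ i + 1 (mod m)`), and let `c ≥ 1`. The complete `S`-partite digraph `K_y` with all
fibers of size `c` (vertex type `Fin m × Fin c`, edge `v → w` iff the fiber index of `w`
is the cyclic successor of that of `v`) has a Hamiltonian cycle. -/
theorem cycleBlowup_hamCycle (m c : ℕ) (hm : 2 ≤ m) (hc : 1 ≤ c) :
    ∃ l : List (Fin m × Fin c),
      IsDiCycle (fun v w : Fin m × Fin c => (w.1 : ℕ) = ((v.1 : ℕ) + 1) % m) l ∧
      ∀ v : Fin m × Fin c, v ∈ l := by
  have hm0 : 0 < m := by omega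
  have hmc : 0 < m * c := Nat.mul_pos hm0 hc
  set f : Fin (m * c) → Fin m × Fin c := fun k =>
    (⟨k % m, Nat.mod_lt _ hm0⟩,
     ⟨k / m, Nat.div_lt_of_lt_mul k.2⟩) with hf
  have hfinj : Function.Injective f := by
    intro a b hab
    have h1 : (a : ℕ) % m = (b : ℕ) % m := congrArg (fun p => (p.1 : ℕ)) hab
    have h2 : (a : ℕ) / m = (b : ℕ) / m := congrArg (fun p => (p.2 : ℕ)) hab
    have ha := Nat.div_add_mod (a : ℕ) m
    have hb := Nat.div_add_mod (b : ℕ) m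
    exact Fin.ext (by
      rw [← Nat.div_add_mod (a : ℕ) m, ← Nat.div_add_mod (b : ℕ) m, h1, h2])
  refine ⟨(List.finRange (m * c)).map f, ⟨?_, ?_, ?_⟩, ?_⟩
  · simp [List.finRange, hmc.ne']
  · exact (List.nodup_finRange _).map hfinj
  · intro i
    simp only [List.get_eq_getElem, List.length_map, List.length_finRange,
      List.getElem_map, List.getElem_finRange, hf, Fin.cast_mk]
    have hdvd : m ∣ m * c := Dvd.intro c rfl
    have hi : i.1 < m * c := by simpa using i.2
    have hL : ((List.finRange (m * c)).map f).length = m * c := by simp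
    rw [Nat.mod_mod_of_dvd _ hdvd]
    rw [Nat.mod_add_mod]
  · intro v
    have h1 : (v.1 : ℕ) < m := v.1.2
    have h2 : (v.2 : ℕ) < c := v.2.2
    have hv : m * (v.2 : ℕ) + (v.1 : ℕ) < m * c := by
      calc m * (v.2 : ℕ) + (v.1 : ℕ) < m * (v.2 : ℕ) + m := by omega
        _ = m * ((v.2 : ℕ) + 1) := by ring
        _ ≤ m * c := Nat.mul_le_mul_left m (by omega)
    refine List.mem_map.mpr ⟨⟨m * (v.2 : ℕ) + (v.1 : ℕ), hv⟩, List.mem_finRange _, ?_⟩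
    simp only [hf]
    refine Prod.ext (Fin.ext ?_) (Fin.ext ?_)
    · show (m * (v.2 : ℕ) + (v.1 : ℕ)) % m = (v.1 : ℕ)
      rw [Nat.mul_add_mod, Nat.mod_eq_of_lt h1]
    · show (m * (v.2 : ℕ) + (v.1 : ℕ)) / m = (v.2 : ℕ)
      rw [Nat.mul_add_div hm0, Nat.div_eq_of_lt h1, Nat.add_zero]
end

section
/- Let S be a strongly connected digraph on m ≥ 2 nodes, and let S' be obtained from S by the surgery on node u_m: add a new node u_{m+1}, add edges { u_i u_{m+1} : u_i u_m ∈ E(S) } and { u_{m+1} u_j : u_m u_j ∈ E(S) }, and delete the self-loop u_m u_m if present. Then S' is strongly connected. -/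
/-- Let `S` be a strongly connected digraph on `m ≥ 2` nodes with a self-loop at the node
`a`, and let `S'` be obtained from `S` by the surgery on `a`: add a new node (represented by
`none`, the old nodes being `some i`), add edges `u_i → u_{m+1}` for every edge `u_i → a` of
`S` and `u_{m+1} → u_j` for every edge `a → u_j` of `S`, and delete the self-loop at `a`.
Then `S'` is strongly connected. -/
theorem surgery_stronglyConnected {m : ℕ} (hm : 2 ≤ m)
    (E : Fin m → Fin m → Prop) (a : Fin m) (hloop : E a a)
    (hconn : ∀ x y : Fin m, Relation.ReflTransGen E x y)
    (E' : Option (Fin m) → Option (Fin m) → Prop)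
    (h1 : ∀ i j : Fin m, E' (some i) (some j) ↔ E i j ∧ ¬(i = a ∧ j = a))
    (h2 : ∀ i : Fin m, E' (some i) none ↔ E i a)
    (h3 : ∀ j : Fin m, E' none (some j) ↔ E a j)
    (h4 : ¬ E' none none) :
    ∀ x y : Option (Fin m), Relation.ReflTransGen E' x y := by
  have lift : ∀ i j : Fin m, Relation.ReflTransGen E i j →
      Relation.ReflTransGen E' (some i) (some j) := by
    intro i j h
    induction h with
    | refl => exact Relation.ReflTransGen.refl
    | tail hbc hE ih =>
      rename_i b c
      by_cases hac : b = a ∧ c = a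
      · obtain ⟨rfl, rfl⟩ := hac
        exact ih.tail ((h2 _).mpr hloop) |>.tail ((h3 _).mpr hloop)
      · exact ih.tail ((h1 b c).mpr ⟨hE, hac⟩)
  intro x y
  match x, y with
  | some i, some j => exact lift i j (hconn i j)
  | some i, none => exact (lift i a (hconn i a)).tail ((h2 a).mpr hloop)
  | none, some j =>
      exact (Relation.ReflTransGen.single ((h3 a).mpr hloop)).trans (lift a j (hconn a j))
  | none, none => exact Relation.ReflTransGen.refl
end

section
/- Let S be a digraph on m ≥ 2 nodes with a self-loop at u_m, and let S' be obtained from S by the surgery on u_m (add node u_{m+1} with edges u_i u_{m+1} for u_i u_m ∈ E(S) and u_{m+1} u_j for u_m u_j ∈ E(S), then delete u_m u_m). Let B_S and B_{S'} be the associated bipartite graphs (with (u'_i, u''_j) an edge iff u_i u_j is a directed edge). If B_S is connected, then B_{S'} is connected. -/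
/-- The undirected bipartite graph `B_S` associated with a directed edge relation `R`:
its vertex set is `α ⊕ α` (the "row" copies `u'_i` and "column" copies `u''_j`), with an
undirected edge between `u'_i` and `u''_j` exactly when `u_i u_j` is a directed edge. -/
def bip {α : Type*} (R : α → α → Prop) : SimpleGraph (α ⊕ α) where
  Adj x y :=
    (∃ i j, x = Sum.inl i ∧ y = Sum.inr j ∧ R i j) ∨
    (∃ i j, x = Sum.inr j ∧ y = Sum.inl i ∧ R i j)
  symm := by
    refine ⟨?_⟩
    rintro x y (⟨i, j, rfl, rfl, h⟩ | ⟨i, j, rfl, rfl, h⟩)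
    · exact Or.inr ⟨i, j, rfl, rfl, h⟩
    · exact Or.inl ⟨i, j, rfl, rfl, h⟩
  loopless := by
    refine ⟨?_⟩
    rintro x (⟨i, j, h1, h2, -⟩ | ⟨i, j, h1, h2, -⟩) <;> subst h1 <;> simp_all

/-- Let `S` be a digraph on `m ≥ 2` nodes with a self-loop at node `a`, and let `S'` be
obtained from `S` by the surgery on `a` (add a new node `none`, edges mirroring those of
`a`, and delete the self-loop at `a`). If the bipartite graph `B_S` is connected, then so
is `B_{S'}`. -/
theorem surgery_bipartite_connected {m : ℕ} (hm : 2 ≤ m)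
    (E : Fin m → Fin m → Prop) (a : Fin m) (hloop : E a a)
    (E' : Option (Fin m) → Option (Fin m) → Prop)
    (h1 : ∀ i j : Fin m, E' (some i) (some j) ↔ E i j ∧ ¬(i = a ∧ j = a))
    (h2 : ∀ i : Fin m, E' (some i) none ↔ E i a)
    (h3 : ∀ j : Fin m, E' none (some j) ↔ E a j)
    (h4 : ¬ E' none none)
    (hconn : (bip E).Connected) :
    (bip E').Connected := by
  classical
  have adj' : ∀ i j, E' i j → (bip E').Adj (Sum.inl i) (Sum.inr j) :=
    fun i j h => Or.inl ⟨i, j, rfl, rfl, h⟩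
  -- key: inl (some a) and inr (some a) are reachable in bip E'
  have key : (bip E').Reachable (Sum.inl (some a)) (Sum.inr (some a)) := by
    by_cases hA : ∃ j, j ≠ a ∧ E a j
    · obtain ⟨j, hj, hE⟩ := hA
      have e1 := adj' (some a) (some j) ((h1 a j).mpr ⟨hE, fun h => hj h.2⟩)
      have e2 := adj' none (some j) ((h3 j).mpr hE)
      have e3 := adj' none (some a) ((h3 a).mpr hloop)
      exact (e1.reachable.trans e2.reachable.symm).trans e3.reachable
    · by_cases hB : ∃ i, i ≠ a ∧ E i a
      · obtain ⟨i, hi, hE⟩ := hB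
        have e1 := adj' (some a) none ((h2 a).mpr hloop)
        have e2 := adj' (some i) none ((h2 i).mpr hE)
        have e3 := adj' (some i) (some a) ((h1 i a).mpr ⟨hE, fun h => hi h.1⟩)
        exact (e1.reachable.trans e2.reachable.symm).trans e3.reachable
      · exfalso
        push_neg at hA hB
        have : Nontrivial (Fin m) := Fin.nontrivial_iff_two_le.mpr hm
        obtain ⟨b, hb⟩ := exists_ne a
        have step : ∀ x y, (bip E).Adj x y →
            (x = Sum.inl a ∨ x = Sum.inr a) → (y = Sum.inl a ∨ y = Sum.inr a) := by
          rintro x y (⟨i, j, rfl, rfl, h⟩ | ⟨i, j, rfl, rfl, h⟩) (hx | hx) <;>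
            simp only [Sum.inl.injEq, Sum.inr.injEq, reduceCtorEq] at hx <;>
            try exact absurd hx (by simp)
          · subst hx
            right
            by_contra hj
            exact hA j (by simpa using hj) h
          · subst hx
            left
            by_contra hi
            exact hB i (by simpa using hi) h
        have wall : ∀ {x y : Fin m ⊕ Fin m} (_ : (bip E).Walk x y),
            (x = Sum.inl a ∨ x = Sum.inr a) → (y = Sum.inl a ∨ y = Sum.inr a) := by
          intro x y w
          induction w with
          | nil => exact id
          | cons h p ih => exact fun hx => ih (step _ _ h hx)
        obtain ⟨w⟩ := hconn (Sum.inl a) (Sum.inl b)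
        rcases wall w (Or.inl rfl) with h | h
        · exact hb (Sum.inl.inj h)
        · exact Sum.inl_ne_inr h
  -- lift reachability from bip E to bip E'
  have lift : ∀ {x y : Fin m ⊕ Fin m} (_ : (bip E).Walk x y),
      (bip E').Reachable (Sum.map some some x) (Sum.map some some y) := by
    intro x y w
    induction w with
    | nil => exact SimpleGraph.Reachable.refl _
    | cons h p ih =>
      refine SimpleGraph.Reachable.trans ?_ ih
      rcases h with ⟨i, j, rfl, rfl, hE⟩ | ⟨i, j, rfl, rfl, hE⟩
      · by_cases hij : i = a ∧ j = a
        · obtain ⟨rfl, rfl⟩ := hij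
          exact key
        · exact (adj' (some i) (some j) ((h1 i j).mpr ⟨hE, hij⟩)).reachable
      · by_cases hij : i = a ∧ j = a
        · obtain ⟨rfl, rfl⟩ := hij
          exact key.symm
        · exact (adj' (some i) (some j) ((h1 i j).mpr ⟨hE, hij⟩)).reachable.symm
  -- hub: everything reachable to inl (some a)
  have hub : ∀ v, (bip E').Reachable v (Sum.inl (some a)) := by
    rintro ((_ | i) | (_ | j))
    · exact (adj' none (some a) ((h3 a).mpr hloop)).reachable.trans key.symm
    · obtain ⟨w⟩ := hconn (Sum.inl i) (Sum.inl a)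
      exact lift w
    · exact (adj' (some a) none ((h2 a).mpr hloop)).reachable.symm
    · obtain ⟨w⟩ := hconn (Sum.inr j) (Sum.inl a)
      exact lift w
  have : Nonempty (Option (Fin m) ⊕ Option (Fin m)) := ⟨Sum.inl none⟩
  exact SimpleGraph.Connected.mk fun x y => (hub x).trans (hub y).symm
end
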